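/- arXiv:1405.0297 — 3 statements merged into one kernel-verified Lean document; each statement's English description precedes it below -/
import Mathlib

section
/- Let D ⊂ ℝ^d be open and κ-fat at every point of its closure with localization radius R ≤ 1/4 and κ ≤ 1/2, in the strengthened sense that for every z in the closure of D and every r ∈ (0, R] there exists a point A_r(z) ∈ D with B(A_r(z), κr) ⊂ D ∩ B(z, r). Fix z₀ ∈ ∂D and define D(z₀) = (D ∩ B(z₀,1)) ∪ ⋃_{z ∈ cl(D ∩ B(z₀,1))} ⋃_{r ∈ (0,R]} B(A_r(z), κr). Then D ∩ B(z₀,1) ⊂ D(z₀) ⊂ D ∩ B(z₀,2), and D(z₀) is κ₁-fat with localization radius R for κ₁ = κ/32: for every w in the closure of D(z₀) and every s ∈ (0,R] there exists a point Ã_s(w) ∈ D(z₀) such that B(Ã_s(w), κ₁ s) ⊂ D(z₀) ∩ B(w, s). -/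
open Metric Set

theorem exists_ball_subset_ball_dist_lt {E : Type*} [NormedAddCommGroup E] [NormedSpace ℝ E]
    {c x : E} {ρ δ : ℝ} (hx : x ∈ ball c ρ) (hδ : 0 < δ) (hδρ : δ ≤ ρ) :
    ∃ p, ball p δ ⊆ ball c ρ ∧ dist p x < δ := by
  have hρ : 0 < ρ := hδ.trans_le hδρ
  have hxc : dist x c < ρ := hx
  set t := δ / ρ
  have ht : t * ρ = δ := div_mul_cancel₀ δ hρ.ne'
  have ht0 : 0 ≤ t := by positivity
  have ht1 : t ≤ 1 := div_le_one_of_le₀ hδρ hρ.le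
  refine ⟨AffineMap.lineMap x c t, ball_subset_ball' ?_, ?_⟩
  · rw [dist_lineMap_right, Real.norm_of_nonneg (sub_nonneg.2 ht1)]
    nlinarith
  · rw [dist_lineMap_left, Real.norm_of_nonneg ht0]
    nlinarith

section FatHull

variable {X : Type*} [PseudoMetricSpace X] {U : Set X} {A : X → ℝ → X} {κ R : ℝ}

def fatHull (U : Set X) (A : X → ℝ → X) (κ R : ℝ) : Set X :=
  U ∪ ⋃ z ∈ closure U, ⋃ r ∈ Ioc (0 : ℝ) R, ball (A z r) (κ * r)

theorem subset_fatHull : U ⊆ fatHull U A κ R :=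
  subset_union_left

theorem ball_subset_fatHull {z : X} (hz : z ∈ closure U) {r : ℝ} (hr : r ∈ Ioc 0 R) :
    ball (A z r) (κ * r) ⊆ fatHull U A κ R :=
  fun _ hx => Or.inr (mem_biUnion hz (mem_biUnion hr hx))

theorem fatHull_subset {S : Set X} (hU : U ⊆ S)
    (hball : ∀ z ∈ closure U, ∀ r ∈ Ioc 0 R, ball (A z r) (κ * r) ⊆ S) :
    fatHull U A κ R ⊆ S :=
  union_subset hU (iUnion₂_subset fun z hz => iUnion₂_subset fun r hr => hball z hz r hr)

theorem exists_ball_subset_fatHull_inter_ball_of_mem_closure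
    (hA : ∀ z ∈ closure U, ∀ r ∈ Ioc 0 R, ball (A z r) (κ * r) ⊆ ball z r)
    {w : X} (hw : w ∈ closure U) {s : ℝ} (hs : s ∈ Ioc 0 R) :
    ∃ p, ball p (κ * s) ⊆ fatHull U A κ R ∩ ball w s :=
  ⟨A w s, subset_inter (ball_subset_fatHull hw hs) (hA w hw s hs)⟩

end FatHull

section Normed

variable {E : Type*} [NormedAddCommGroup E] [NormedSpace ℝ E] {U : Set E} {A : E → ℝ → E}
  {κ R : ℝ}

/-- A point of an added ball `ball (A z r) (κ * r)` is close to a ball of radius `κ s / 4` inside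
the hull: for `r ≤ s / 4` take the added ball at `z` of scale `s / 2`, otherwise slide inside the
given ball towards its centre. -/
theorem exists_ball_subset_fatHull_inter_ball_of_mem_ball (hκ : 0 < κ) (hκ' : κ ≤ 1 / 2)
    (hA : ∀ z ∈ closure U, ∀ r ∈ Ioc 0 R, ball (A z r) (κ * r) ⊆ ball z r)
    {z : E} (hz : z ∈ closure U) {r : ℝ} (hr : r ∈ Ioc 0 R) {x : E}
    (hx : x ∈ ball (A z r) (κ * r)) {s : ℝ} (hs : s ∈ Ioc 0 R) :
    ∃ p, ball p (κ * s / 4) ⊆ fatHull U A κ R ∩ ball x (3 * s / 4) := by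
  obtain ⟨hs0, hsR⟩ := hs
  have hxz : dist x z < r := hA z hz r hr hx
  rcases le_or_gt r (s / 4) with hrs | hrs
  · have hs2 : s / 2 ∈ Ioc 0 R := ⟨by positivity, by linarith⟩
    refine ⟨A z (s / 2), ?_⟩
    have hsub : ball (A z (s / 2)) (κ * s / 4) ⊆ ball (A z (s / 2)) (κ * (s / 2)) :=
      ball_subset_ball (by nlinarith)
    refine subset_inter (hsub.trans (ball_subset_fatHull hz hs2)) ?_
    calc ball (A z (s / 2)) (κ * s / 4) ⊆ ball z (s / 2) := hsub.trans (hA z hz _ hs2)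
      _ ⊆ ball x (3 * s / 4) := ball_subset_ball' (by rw [dist_comm]; linarith)
  · obtain ⟨p, hp, hpx⟩ :=
      exists_ball_subset_ball_dist_lt hx (by positivity) (by nlinarith : κ * s / 4 ≤ κ * r)
    exact ⟨p, subset_inter (hp.trans (ball_subset_fatHull hz hr))
      (ball_subset_ball' (by nlinarith))⟩

theorem exists_ball_subset_fatHull_inter_ball (hκ : 0 < κ) (hκ' : κ ≤ 1 / 2)
    (hA : ∀ z ∈ closure U, ∀ r ∈ Ioc 0 R, ball (A z r) (κ * r) ⊆ ball z r)
    {w : E} (hw : w ∈ closure (fatHull U A κ R)) {s : ℝ} (hs : s ∈ Ioc 0 R) :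
    ∃ p, ball p (κ * s / 4) ⊆ fatHull U A κ R ∩ ball w s := by
  rw [fatHull, closure_union] at hw
  rcases hw with hwU | hw
  · obtain ⟨p, hp⟩ := exists_ball_subset_fatHull_inter_ball_of_mem_closure hA hwU hs
    exact ⟨p, (ball_subset_ball (by nlinarith [hs.1])).trans hp⟩
  · obtain ⟨x, hx, hwx⟩ := Metric.mem_closure_iff.1 hw (s / 4) (by linarith [hs.1])
    simp only [mem_iUnion, exists_prop] at hx
    obtain ⟨z, hz, r, hr, hx⟩ := hx
    obtain ⟨p, hp⟩ := exists_ball_subset_fatHull_inter_ball_of_mem_ball hκ hκ' hA hz hr hx hs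
    exact ⟨p, hp.trans (inter_subset_inter_right _ (ball_subset_ball' (by rw [dist_comm]; linarith)))⟩

end Normed

theorem localization_of_fat_set_general
    (d : ℕ) (D : Set (EuclideanSpace ℝ (Fin d)))
    (κ R : ℝ) (hκ : 0 < κ) (hκ' : κ ≤ 1 / 2) (hR' : R ≤ 1 / 4)
    (A : EuclideanSpace ℝ (Fin d) → ℝ → EuclideanSpace ℝ (Fin d))
    (hA : ∀ z ∈ closure D, ∀ r : ℝ, 0 < r → r ≤ R →
      A z r ∈ D ∧ ball (A z r) (κ * r) ⊆ D ∩ ball z r)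
    (z₀ : EuclideanSpace ℝ (Fin d))
    (Dz : Set (EuclideanSpace ℝ (Fin d)))
    (hDz : Dz = (D ∩ ball z₀ 1) ∪
      ⋃ z ∈ closure (D ∩ ball z₀ 1), ⋃ r ∈ Ioc (0 : ℝ) R, ball (A z r) (κ * r)) :
    D ∩ ball z₀ 1 ⊆ Dz ∧ Dz ⊆ D ∩ ball z₀ 2 ∧
      ∀ w ∈ closure Dz, ∀ s : ℝ, 0 < s → s ≤ R →
        ∃ Atil ∈ Dz, ball Atil ((κ / 32) * s) ⊆ Dz ∩ ball w s := by
  obtain rfl : Dz = fatHull (D ∩ ball z₀ 1) A κ R := hDz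
  have hA' : ∀ z ∈ closure (D ∩ ball z₀ 1), ∀ r ∈ Ioc 0 R,
      ball (A z r) (κ * r) ⊆ D ∩ ball z r :=
    fun z hz r hr => (hA z (closure_mono inter_subset_left hz) r hr.1 hr.2).2
  refine ⟨subset_fatHull, fatHull_subset (inter_subset_inter_right _ (ball_subset_ball one_le_two))
    fun z hz r hr => (hA' z hz r hr).trans (inter_subset_inter_right _ (ball_subset_ball' ?_)), ?_⟩
  · have hz₀ : dist z z₀ ≤ 1 :=
      closure_ball_subset_closedBall (closure_mono inter_subset_right hz)
    linarith [hr.2]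
  · intro w hw s hs hsR
    obtain ⟨p, hp⟩ := exists_ball_subset_fatHull_inter_ball hκ hκ'
      (fun z hz r hr => (hA' z hz r hr).trans inter_subset_right) hw ⟨hs, hsR⟩
    have hsub : ball p ((κ / 32) * s) ⊆ ball p (κ * s / 4) := ball_subset_ball (by nlinarith)
    exact ⟨p, (hsub.trans hp (mem_ball_self (by positivity))).1, hsub.trans hp⟩

theorem localization_of_fat_set
    (d : ℕ) (D : Set (EuclideanSpace ℝ (Fin d))) (hD : IsOpen D)
    (κ R : ℝ) (hκ : 0 < κ) (hκ' : κ ≤ 1 / 2) (hR : 0 < R) (hR' : R ≤ 1 / 4)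
    (A : EuclideanSpace ℝ (Fin d) → ℝ → EuclideanSpace ℝ (Fin d))
    (hA : ∀ z ∈ closure D, ∀ r : ℝ, 0 < r → r ≤ R →
      A z r ∈ D ∧ ball (A z r) (κ * r) ⊆ D ∩ ball z r)
    (z₀ : EuclideanSpace ℝ (Fin d)) (hz₀ : z₀ ∈ frontier D)
    (Dz : Set (EuclideanSpace ℝ (Fin d)))
    (hDz : Dz = (D ∩ ball z₀ 1) ∪
      ⋃ z ∈ closure (D ∩ ball z₀ 1), ⋃ r ∈ Ioc (0 : ℝ) R, ball (A z r) (κ * r)) :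
    D ∩ ball z₀ 1 ⊆ Dz ∧ Dz ⊆ D ∩ ball z₀ 2 ∧
      ∀ w ∈ closure Dz, ∀ s : ℝ, 0 < s → s ≤ R →
        ∃ Atil ∈ Dz, ball Atil ((κ / 32) * s) ⊆ Dz ∩ ball w s :=
  localization_of_fat_set_general d D κ R hκ hκ' hR' A hA z₀ Dz hDz
end

section
/- Let h : ℝ^{d-1} → ℝ be bounded and let f : ℝ^{d-1} → [0,∞) be Lipschitz with f(x̃) = 0 for |x̃| ≤ 1. Let A = {(x̃, x_d) ∈ ℝ^{d-1} × ℝ : |x̃| > 1, h(x̃) < x_d ≤ f(x̃) + h(x̃)}. Then there exists a constant c₁ ≥ 1 (depending only on the Lipschitz constant of f and the bound on h) such that |x̃| ≤ |x| ≤ c₁|x̃| for every x = (x̃, x_d) ∈ A, and consequently c₁^{-d} ∫_{|x̃|>1} f(x̃)|x̃|^{-d} dx̃ ≤ ∫_A |x|^{-d} dx ≤ ∫_{|x̃|>1} f(x̃)|x̃|^{-d} dx̃ · c₂ for some constant c₂ depending only on c₁. In particular, ∫_A |x|^{-d} dx < ∞ if and only if ∫_{|x̃|>1} f(x̃)|x̃|^{-d}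 dx̃ < ∞. -/
open Metric Set MeasureTheory ENNReal

/-!
Write `x = (x̃, t)`. For `|x̃| > 1` and `(x̃, t) ∈ A` one has `-M < t ≤ L|x̃| + M`, hence
`|t| ≤ (L + M)|x̃|` and `|x̃| ≤ |x| ≤ (1 + L + M)|x̃|`. By Tonelli the integral of a function
of `x̃` over a measurable set is the integral of that function times the length of the vertical
slices; the slices of `A` contain `(h(x̃), h(x̃) + f(x̃)]`, which gives the lower bound with
`c₁ = 1 + L + M`.

Since `h` is arbitrary, `A` need not be measurable, and the integral over `A` is really one over a
measurable hull whose slices are only known to lie in `(-M, f(x̃) + M]`. This still bounds the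
integral over `A` by `∫_{|x̃|>1} (f(x̃) + 2M)|x̃|^{-d}`, which is finite when the `f`-integral is,
because `|x̃|^{-d}` is integrable at infinity in dimension `d - 1`. Moreover `A` lies over
`{f > 0}`, which is null when the `f`-integral vanishes. These two facts are all that is needed
to choose `c₂`.
-/

theorem ENNReal.exists_le_ofReal_mul {a b : ℝ≥0∞} (h0 : b = 0 → a = 0) (htop : b ≠ ∞ → a ≠ ∞) :
    ∃ c : ℝ, 0 < c ∧ a ≤ ENNReal.ofReal c * b := by
  rcases eq_or_ne b 0 with rfl | hb0
  · exact ⟨1, one_pos, by simp [h0 rfl]⟩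
  rcases eq_or_ne b ∞ with rfl | hbtop
  · exact ⟨1, one_pos, by simp⟩
  refine ⟨(a / b).toReal + 1, by positivity, ?_⟩
  calc a = a / b * b := (ENNReal.div_mul_cancel hb0 hbtop).symm
    _ ≤ ENNReal.ofReal ((a / b).toReal + 1) * b := by
      gcongr
      exact (ENNReal.ofReal_toReal (ENNReal.div_ne_top (htop hbtop) hb0)).symm.le.trans
        (ENNReal.ofReal_le_ofReal (le_add_of_nonneg_right zero_le_one))

theorem Real.sqrt_sq_add_sq_le_of_abs_le {r t k : ℝ} (hr : 0 ≤ r) (hk : 0 ≤ k)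
    (ht : |t| ≤ k * r) : √(r ^ 2 + t ^ 2) ≤ (1 + k) * r := by
  rw [Real.sqrt_le_left (by positivity)]
  nlinarith [sq_abs t, abs_nonneg t, mul_nonneg hk hr]

theorem Real.rpow_neg_le_of_le_mul {a b c s : ℝ} (ha : 0 < a) (hab : a ≤ b) (hbc : b ≤ c * a)
    (hs : 0 ≤ s) : c ^ (-s) * a ^ (-s) ≤ b ^ (-s) := by
  have hc : 0 ≤ c := nonneg_of_mul_nonneg_left ((ha.trans_le hab).le.trans hbc) ha
  rw [← Real.mul_rpow hc ha.le]
  exact Real.rpow_le_rpow_of_nonpos (ha.trans_le hab) hbc (neg_nonpos.2 hs)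

theorem setLIntegral_comp_fst_prod {α β : Type*} [MeasurableSpace α] [MeasurableSpace β]
    {μ : Measure α} {ν : Measure β} [SFinite μ] [SFinite ν] {s : Set (α × β)}
    (hs : MeasurableSet s) {c : α → ℝ≥0∞} (hc : Measurable c) :
    ∫⁻ p in s, c p.1 ∂μ.prod ν = ∫⁻ x, c x * ν (Prod.mk x ⁻¹' s) ∂μ := by
  rw [← withDensity_apply _ hs, ← prod_withDensity_left hc, Measure.prod_apply hs,
    lintegral_withDensity_eq_lintegral_mul _ hc (measurable_measure_prodMk_left hs)]
  rfl

theorem lintegral_norm_rpow_neg_lt_top {E : Type*} [NormedAddCommGroup E] [NormedSpace ℝ E]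
    [FiniteDimensional ℝ E] [MeasurableSpace E] [BorelSpace E] (μ : Measure E)
    [μ.IsAddHaarMeasure] {s : ℝ} (hs : Module.finrank ℝ E < s) :
    ∫⁻ x in {x : E | 1 < ‖x‖}, ENNReal.ofReal (‖x‖ ^ (-s)) ∂μ < ∞ := by
  have hs0 : 0 ≤ s := (Nat.cast_nonneg _).trans hs.le
  have hbound : ∀ x ∈ {x : E | 1 < ‖x‖},
      ENNReal.ofReal (‖x‖ ^ (-s)) ≤ ENNReal.ofReal (2 ^ s) * ENNReal.ofReal ((1 + ‖x‖) ^ (-s)) := by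
    intro x hx
    rw [← ENNReal.ofReal_mul (by positivity)]
    refine ENNReal.ofReal_le_ofReal ?_
    calc ‖x‖ ^ (-s) ≤ ((1 + ‖x‖) / 2) ^ (-s) :=
          Real.rpow_le_rpow_of_nonpos (by positivity) (by linarith [hx.out]) (neg_nonpos.2 hs0)
      _ = 2 ^ s * (1 + ‖x‖) ^ (-s) := by
          rw [Real.div_rpow (by positivity) zero_le_two, Real.rpow_neg zero_le_two,
            div_inv_eq_mul, mul_comm]
  calc ∫⁻ x in {x : E | 1 < ‖x‖}, ENNReal.ofReal (‖x‖ ^ (-s)) ∂μ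
      ≤ ∫⁻ x, ENNReal.ofReal (2 ^ s) * ENNReal.ofReal ((1 + ‖x‖) ^ (-s)) ∂μ :=
        (setLIntegral_mono' (measurableSet_lt measurable_const measurable_norm) hbound).trans
          (setLIntegral_le_lintegral _ _)
    _ < ∞ := by
        rw [lintegral_const_mul' _ _ ENNReal.ofReal_ne_top]
        exact ENNReal.mul_lt_top ENNReal.ofReal_lt_top (finite_integral_one_add_norm hs)

section GraphRegion

variable {E : Type*} [NormedAddCommGroup E]

def graphRegion (f h : E → ℝ) : Set (E × ℝ) :=
  {p | 1 < ‖p.1‖ ∧ h p.1 < p.2 ∧ p.2 ≤ f p.1 + h p.1}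

def exteriorBand (f : E → ℝ) (M : ℝ) : Set (E × ℝ) :=
  {p | 1 < ‖p.1‖ ∧ -M < p.2 ∧ p.2 ≤ f p.1 + M}

variable {f h : E → ℝ} {M : ℝ}

theorem graphRegion_subset_exteriorBand (hM : ∀ x, |h x| ≤ M) :
    graphRegion f h ⊆ exteriorBand f M := by
  rintro p ⟨hp, hlow, hup⟩
  have := abs_le.1 (hM p.1)
  exact ⟨hp, by linarith, by linarith⟩

theorem graphRegion_subset_prod : graphRegion f h ⊆ {x | 1 < ‖x‖ ∧ 0 < f x} ×ˢ univ :=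
  fun _ ⟨hp, hlow, hup⟩ ↦ ⟨⟨hp, by linarith⟩, trivial⟩

theorem abs_snd_le_of_mem_exteriorBand {L : NNReal} (hM : 0 ≤ M) (hfL : ∀ x, f x ≤ L * ‖x‖)
    {p : E × ℝ} (hp : p ∈ exteriorBand f M) : |p.2| ≤ (L + M) * ‖p.1‖ := by
  obtain ⟨hp, hlow, hup⟩ := hp
  have hM' : M ≤ M * ‖p.1‖ := le_mul_of_one_le_right hM hp.le
  have hL : 0 ≤ (L : ℝ) * ‖p.1‖ := by positivity
  rw [abs_le]
  constructor <;> nlinarith [hfL p.1]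

theorem sqrt_le_mul_norm_of_mem_exteriorBand {L : NNReal} (hM : 0 ≤ M)
    (hfL : ∀ x, f x ≤ L * ‖x‖) {p : E × ℝ} (hp : p ∈ exteriorBand f M) :
    √(‖p.1‖ ^ 2 + p.2 ^ 2) ≤ (1 + (L + M)) * ‖p.1‖ :=
  Real.sqrt_sq_add_sq_le_of_abs_le (norm_nonneg _) (by positivity)
    (abs_snd_le_of_mem_exteriorBand hM hfL hp)

theorem norm_le_sqrt_norm_sq_add_sq (x : E) (t : ℝ) : ‖x‖ ≤ √(‖x‖ ^ 2 + t ^ 2) :=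
  (le_abs_self _).trans (Real.abs_le_sqrt (le_add_of_nonneg_right (sq_nonneg t)))

theorem ofReal_le_volume_slice {W : Set (E × ℝ)} (hW : graphRegion f h ⊆ W) {x : E}
    (hx : 1 < ‖x‖) : ENNReal.ofReal (f x) ≤ volume (Prod.mk x ⁻¹' W) :=
  calc ENNReal.ofReal (f x) = volume (Ioc (h x) (f x + h x)) := by
        rw [Real.volume_Ioc, add_sub_cancel_right]
    _ ≤ volume (Prod.mk x ⁻¹' W) := measure_mono fun _ ht ↦ hW ⟨hx, ht⟩

theorem volume_slice_exteriorBand (x : E) :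
    volume (Prod.mk x ⁻¹' exteriorBand f M) =
      {x : E | 1 < ‖x‖}.indicator (fun x ↦ ENNReal.ofReal (f x + 2 * M)) x := by
  by_cases hx : 1 < ‖x‖
  · have hslice : Prod.mk x ⁻¹' exteriorBand f M = Ioc (-M) (f x + M) := by
      ext t; simp [exteriorBand, hx]
    rw [hslice, Real.volume_Ioc, indicator_of_mem (show x ∈ {x : E | 1 < ‖x‖} from hx)]
    congr 1
    ring
  · have hslice : Prod.mk x ⁻¹' exteriorBand f M = ∅ := by
      ext t; simp [exteriorBand, hx]
    rw [hslice, measure_empty, indicator_of_notMem (show x ∉ {x : E | 1 < ‖x‖} from hx)]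

theorem measurableSet_exteriorBand [MeasurableSpace E] [OpensMeasurableSpace E]
    (hf : Measurable f) : MeasurableSet (exteriorBand f M) :=
  (measurableSet_lt measurable_const measurable_fst.norm).inter
    ((measurableSet_lt measurable_const measurable_snd).inter
      (measurableSet_le measurable_snd ((hf.comp measurable_fst).add_const M)))

end GraphRegion

section Integrals

variable {E : Type*} [NormedAddCommGroup E] [MeasurableSpace E] [OpensMeasurableSpace E]
  {μ : Measure E} {f h : E → ℝ} {M s : ℝ}

theorem lintegral_graphRegion_eq_zero (hf : Measurable f)
    (h0 : ∫⁻ x in {x | 1 < ‖x‖}, ENNReal.ofReal (f x * ‖x‖ ^ (-s)) ∂μ = 0) :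
    ∫⁻ p in graphRegion f h, ENNReal.ofReal (√(‖p.1‖ ^ 2 + p.2 ^ 2) ^ (-s)) ∂μ.prod volume = 0 := by
  have hS : μ {x | 1 < ‖x‖ ∧ 0 < f x} = 0 := by
    rw [lintegral_eq_zero_iff (by fun_prop), Filter.EventuallyEq,
      ae_restrict_iff' (measurableSet_lt measurable_const measurable_norm)] at h0
    rw [measure_eq_zero_iff_ae_notMem]
    filter_upwards [h0] with x hx ⟨hx1, hfx⟩
    have hpos : 0 < f x * ‖x‖ ^ (-s) := mul_pos hfx (Real.rpow_pos_of_pos (one_pos.trans hx1) _)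
    exact (ENNReal.ofReal_pos.2 hpos).ne' (hx hx1)
  refine setLIntegral_measure_zero _ _ (measure_mono_null graphRegion_subset_prod ?_)
  rw [Measure.prod_prod, hS, zero_mul]

variable [SFinite μ]

theorem lintegral_graphRegion_le (hM : ∀ x, |h x| ≤ M) (hf : Measurable f) (hs : 0 ≤ s) :
    ∫⁻ p in graphRegion f h, ENNReal.ofReal (√(‖p.1‖ ^ 2 + p.2 ^ 2) ^ (-s)) ∂μ.prod volume ≤
      ∫⁻ x in {x | 1 < ‖x‖}, ENNReal.ofReal (f x * ‖x‖ ^ (-s)) ∂μ +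
        ENNReal.ofReal (2 * M) * ∫⁻ x in {x | 1 < ‖x‖}, ENNReal.ofReal (‖x‖ ^ (-s)) ∂μ := by
  have hu : Measurable fun x : E ↦ ENNReal.ofReal (‖x‖ ^ (-s)) := by fun_prop
  calc _ ≤ ∫⁻ p in exteriorBand f M, ENNReal.ofReal (√(‖p.1‖ ^ 2 + p.2 ^ 2) ^ (-s))
          ∂μ.prod volume := lintegral_mono_set (graphRegion_subset_exteriorBand hM)
    _ ≤ ∫⁻ p in exteriorBand f M, ENNReal.ofReal (‖p.1‖ ^ (-s)) ∂μ.prod volume :=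
        setLIntegral_mono (hu.comp measurable_fst) fun p hp ↦ ENNReal.ofReal_le_ofReal <|
          Real.rpow_le_rpow_of_nonpos (one_pos.trans hp.1) (norm_le_sqrt_norm_sq_add_sq _ _)
            (neg_nonpos.2 hs)
    _ = ∫⁻ x in {x | 1 < ‖x‖}, ENNReal.ofReal (‖x‖ ^ (-s)) * ENNReal.ofReal (f x + 2 * M) ∂μ := by
        rw [setLIntegral_comp_fst_prod (measurableSet_exteriorBand hf) hu,
          ← lintegral_indicator (measurableSet_lt measurable_const measurable_norm)]
        simp_rw [volume_slice_exteriorBand, indicator_mul_right]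
    _ ≤ ∫⁻ x in {x | 1 < ‖x‖}, (ENNReal.ofReal (f x * ‖x‖ ^ (-s)) +
          ENNReal.ofReal (2 * M) * ENNReal.ofReal (‖x‖ ^ (-s))) ∂μ := by
        refine lintegral_mono fun x ↦ ?_
        calc ENNReal.ofReal (‖x‖ ^ (-s)) * ENNReal.ofReal (f x + 2 * M)
            ≤ ENNReal.ofReal (‖x‖ ^ (-s)) * (ENNReal.ofReal (f x) + ENNReal.ofReal (2 * M)) := by
              gcongr; exact ENNReal.ofReal_add_le
          _ = _ := by rw [ENNReal.ofReal_mul' (p := f x) (by positivity)]; ring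
    _ = _ := by
        rw [lintegral_add_left (by fun_prop), lintegral_const_mul' _ _ ENNReal.ofReal_ne_top]

theorem le_lintegral_graphRegion {L : NNReal} (hM : ∀ x, |h x| ≤ M) (hfL : ∀ x, f x ≤ L * ‖x‖)
    (hf : Measurable f) (hs : 0 ≤ s) :
    ENNReal.ofReal ((1 + (L + M)) ^ (-s)) *
        ∫⁻ x in {x | 1 < ‖x‖}, ENNReal.ofReal (f x * ‖x‖ ^ (-s)) ∂μ ≤
      ∫⁻ p in graphRegion f h, ENNReal.ofReal (√(‖p.1‖ ^ 2 + p.2 ^ 2) ^ (-s)) ∂μ.prod volume := by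
  have hM0 : 0 ≤ M := (abs_nonneg _).trans (hM 0)
  set c := ENNReal.ofReal ((1 + (L + M)) ^ (-s))
  set W := toMeasurable (μ.prod volume) (graphRegion f h) ∩ exteriorBand f M
  have hAW : graphRegion f h ⊆ W :=
    subset_inter (subset_toMeasurable _ _) (graphRegion_subset_exteriorBand hM)
  have hW : MeasurableSet W :=
    (measurableSet_toMeasurable _ _).inter (measurableSet_exteriorBand hf)
  have hcu : Measurable fun x : E ↦ c * ENNReal.ofReal (‖x‖ ^ (-s)) := by fun_prop
  have hband : ∀ p ∈ W, c * ENNReal.ofReal (‖p.1‖ ^ (-s)) ≤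
      ENNReal.ofReal (√(‖p.1‖ ^ 2 + p.2 ^ 2) ^ (-s)) := fun p hp ↦ by
    rw [← ENNReal.ofReal_mul (by positivity)]
    exact ENNReal.ofReal_le_ofReal <| Real.rpow_neg_le_of_le_mul (one_pos.trans hp.2.1)
      (norm_le_sqrt_norm_sq_add_sq _ _)
      (sqrt_le_mul_norm_of_mem_exteriorBand hM0 hfL hp.2) hs
  calc c * ∫⁻ x in {x | 1 < ‖x‖}, ENNReal.ofReal (f x * ‖x‖ ^ (-s)) ∂μ
      = ∫⁻ x in {x | 1 < ‖x‖}, c * ENNReal.ofReal (‖x‖ ^ (-s)) * ENNReal.ofReal (f x) ∂μ := by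
        rw [← lintegral_const_mul' _ _ ENNReal.ofReal_ne_top]
        refine lintegral_congr fun x ↦ ?_
        rw [mul_comm (f x), ENNReal.ofReal_mul (by positivity), mul_assoc]
    _ ≤ ∫⁻ x in {x | 1 < ‖x‖}, c * ENNReal.ofReal (‖x‖ ^ (-s)) * volume (Prod.mk x ⁻¹' W) ∂μ :=
        setLIntegral_mono' (measurableSet_lt measurable_const measurable_norm) fun x hx ↦ by
          gcongr; exact ofReal_le_volume_slice hAW hx
    _ ≤ ∫⁻ x, c * ENNReal.ofReal (‖x‖ ^ (-s)) * volume (Prod.mk x ⁻¹' W) ∂μ :=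
        setLIntegral_le_lintegral _ _
    _ = ∫⁻ p in W, c * ENNReal.ofReal (‖p.1‖ ^ (-s)) ∂μ.prod volume :=
        (setLIntegral_comp_fst_prod hW hcu).symm
    _ ≤ ∫⁻ p in W, ENNReal.ofReal (√(‖p.1‖ ^ 2 + p.2 ^ 2) ^ (-s)) ∂μ.prod volume :=
        setLIntegral_mono (by fun_prop) hband
    _ ≤ ∫⁻ p in toMeasurable (μ.prod volume) (graphRegion f h),
          ENNReal.ofReal (√(‖p.1‖ ^ 2 + p.2 ^ 2) ^ (-s)) ∂μ.prod volume :=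
        lintegral_mono_set inter_subset_left
    _ = _ := by rw [Measure.restrict_toMeasurable_of_sFinite]

end Integrals

theorem graph_region_integral_comparison_general
    (d : ℕ) (hd : 2 ≤ d)
    (h : EuclideanSpace ℝ (Fin (d - 1)) → ℝ) (M : ℝ) (hM : ∀ x, |h x| ≤ M)
    (f : EuclideanSpace ℝ (Fin (d - 1)) → ℝ) (L : NNReal) (hf : LipschitzWith L f)
    (hf1 : ∀ x, ‖x‖ ≤ 1 → f x = 0)
    (A : Set (EuclideanSpace ℝ (Fin (d - 1)) × ℝ))
    (hA : A = {p | 1 < ‖p.1‖ ∧ h p.1 < p.2 ∧ p.2 ≤ f p.1 + h p.1}) :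
    ∃ c₁ : ℝ, 1 ≤ c₁ ∧
      (∀ p ∈ A, ‖p.1‖ ≤ Real.sqrt (‖p.1‖ ^ 2 + p.2 ^ 2) ∧
        Real.sqrt (‖p.1‖ ^ 2 + p.2 ^ 2) ≤ c₁ * ‖p.1‖) ∧
      ∃ c₂ : ℝ, 0 < c₂ ∧
        ENNReal.ofReal (c₁ ^ (-(d : ℝ))) *
            (∫⁻ x in {x : EuclideanSpace ℝ (Fin (d - 1)) | 1 < ‖x‖},
              ENNReal.ofReal (f x * ‖x‖ ^ (-(d : ℝ)))) ≤
          (∫⁻ p in A, ENNReal.ofReal ((Real.sqrt (‖p.1‖ ^ 2 + p.2 ^ 2)) ^ (-(d : ℝ)))) ∧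
        (∫⁻ p in A, ENNReal.ofReal ((Real.sqrt (‖p.1‖ ^ 2 + p.2 ^ 2)) ^ (-(d : ℝ)))) ≤
          ENNReal.ofReal c₂ *
            (∫⁻ x in {x : EuclideanSpace ℝ (Fin (d - 1)) | 1 < ‖x‖},
              ENNReal.ofReal (f x * ‖x‖ ^ (-(d : ℝ)))) ∧
        ((∫⁻ p in A, ENNReal.ofReal ((Real.sqrt (‖p.1‖ ^ 2 + p.2 ^ 2)) ^ (-(d : ℝ)))) < ⊤ ↔
          (∫⁻ x in {x : EuclideanSpace ℝ (Fin (d - 1)) | 1 < ‖x‖},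
            ENNReal.ofReal (f x * ‖x‖ ^ (-(d : ℝ)))) < ⊤) := by
  change A = graphRegion f h at hA
  subst hA
  have hM0 : 0 ≤ M := (abs_nonneg _).trans (hM 0)
  have hfm : Measurable f := hf.continuous.measurable
  have hfL : ∀ x, f x ≤ L * ‖x‖ := fun x ↦
    (le_abs_self _).trans (hf.norm_le_mul (hf1 0 (by simp)) x)
  have hs : (0 : ℝ) ≤ d := d.cast_nonneg
  have htail := lintegral_norm_rpow_neg_lt_top (volume : Measure (EuclideanSpace ℝ (Fin (d - 1))))
    (s := d) (by rw [finrank_euclideanSpace_fin]; exact_mod_cast Nat.sub_lt (by omega) one_pos)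
  rw [Measure.volume_eq_prod]
  have hlower := le_lintegral_graphRegion (μ := volume) hM hfL hfm hs
  have hupper := lintegral_graphRegion_le (μ := volume) hM hfm hs
  have hfinite : (∫⁻ p in graphRegion f h, ENNReal.ofReal (√(‖p.1‖ ^ 2 + p.2 ^ 2) ^ (-(d : ℝ)))
        ∂(volume.prod volume)) < ⊤ ↔
      (∫⁻ x in {x | 1 < ‖x‖}, ENNReal.ofReal (f x * ‖x‖ ^ (-(d : ℝ)))) < ⊤ :=
    ⟨fun hJ ↦ ENNReal.lt_top_of_mul_ne_top_right (hlower.trans_lt hJ).ne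
        (ENNReal.ofReal_pos.2 (Real.rpow_pos_of_pos (by positivity) _)).ne',
      fun hI ↦ hupper.trans_lt (ENNReal.add_lt_top.2 ⟨hI, ENNReal.mul_lt_top ofReal_lt_top htail⟩)⟩
  obtain ⟨c₂, hc₂, hJ⟩ := ENNReal.exists_le_ofReal_mul (lintegral_graphRegion_eq_zero hfm)
    fun hI ↦ (hfinite.2 hI.lt_top).ne
  exact ⟨1 + (L + M), by linarith [L.coe_nonneg], fun p hp ↦ ⟨norm_le_sqrt_norm_sq_add_sq _ _,
    sqrt_le_mul_norm_of_mem_exteriorBand hM0 hfL (graphRegion_subset_exteriorBand hM hp)⟩,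
    c₂, hc₂, hlower, hJ, hfinite⟩

theorem graph_region_integral_comparison
    (d : ℕ) (hd : 2 ≤ d)
    (h : EuclideanSpace ℝ (Fin (d - 1)) → ℝ) (M : ℝ) (hM : ∀ x, |h x| ≤ M)
    (f : EuclideanSpace ℝ (Fin (d - 1)) → ℝ) (L : NNReal) (hf : LipschitzWith L f)
    (hf0 : ∀ x, 0 ≤ f x) (hf1 : ∀ x, ‖x‖ ≤ 1 → f x = 0)
    (A : Set (EuclideanSpace ℝ (Fin (d - 1)) × ℝ))
    (hA : A = {p | 1 < ‖p.1‖ ∧ h p.1 < p.2 ∧ p.2 ≤ f p.1 + h p.1}) :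
    ∃ c₁ : ℝ, 1 ≤ c₁ ∧
      (∀ p ∈ A, ‖p.1‖ ≤ Real.sqrt (‖p.1‖ ^ 2 + p.2 ^ 2) ∧
        Real.sqrt (‖p.1‖ ^ 2 + p.2 ^ 2) ≤ c₁ * ‖p.1‖) ∧
      ∃ c₂ : ℝ, 0 < c₂ ∧
        ENNReal.ofReal (c₁ ^ (-(d : ℝ))) *
            (∫⁻ x in {x : EuclideanSpace ℝ (Fin (d - 1)) | 1 < ‖x‖},
              ENNReal.ofReal (f x * ‖x‖ ^ (-(d : ℝ)))) ≤
          (∫⁻ p in A, ENNReal.ofReal ((Real.sqrt (‖p.1‖ ^ 2 + p.2 ^ 2)) ^ (-(d : ℝ)))) ∧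
        (∫⁻ p in A, ENNReal.ofReal ((Real.sqrt (‖p.1‖ ^ 2 + p.2 ^ 2)) ^ (-(d : ℝ)))) ≤
          ENNReal.ofReal c₂ *
            (∫⁻ x in {x : EuclideanSpace ℝ (Fin (d - 1)) | 1 < ‖x‖},
              ENNReal.ofReal (f x * ‖x‖ ^ (-(d : ℝ)))) ∧
        ((∫⁻ p in A, ENNReal.ofReal ((Real.sqrt (‖p.1‖ ^ 2 + p.2 ^ 2)) ^ (-(d : ℝ)))) < ⊤ ↔
          (∫⁻ x in {x : EuclideanSpace ℝ (Fin (d - 1)) | 1 < ‖x‖},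
            ENNReal.ofReal (f x * ‖x‖ ^ (-(d : ℝ)))) < ⊤) :=
  graph_region_integral_comparison_general d hd h M hM f L hf hf1 A hA
end

section
/- Let g : (0,∞) → [0,∞) be nonincreasing and let r > 0. There is a dimensional constant c = c(d) > 0 such that for every w ∈ ℝ^d with |w| ≤ r, ∫_{B(0,r) ∩ B(w,r)} g(|w - y|) dy ≥ c ∫_{B(0,r)} g(|y|) dy. -/
open Metric Set MeasureTheory ENNReal

open scoped RealInnerProductSpace

/-!
Finitely many closed cones of half-angle `π / 3` around unit vectors cover the space, by
compactness of the unit sphere. A rotation carrying one axis to another preserves Lebesgue measure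
and radial integrands, so the cones all carry the same share of `∫_{B(0,r)} g(|y|) dy`. The cone
around the direction of `w`, pushed forward by `u ↦ w - u`, lies in `B(0,r) ∩ B(w,r)` except for
the point `w`, and turns the integrand into `g(|w - y|)`; hence `c = 1 / N` for `N` cones.
-/

section

variable {E : Type*} [NormedAddCommGroup E] [InnerProductSpace ℝ E]

/-- For a unit vector `a`, the closed cone of vectors making an angle at most `π / 3` with `a`. -/
def cone (a : E) : Set E := {u | ‖u‖ / 2 ≤ ⟪a, u⟫}

theorem zero_mem_cone (a : E) : (0 : E) ∈ cone a := by
  simp [cone]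

theorem smul_mem_cone {a u : E} {c : ℝ} (hc : 0 ≤ c) (hu : u ∈ cone a) : c • u ∈ cone a := by
  simp only [cone, mem_ofPred_eq, norm_smul, Real.norm_of_nonneg hc, real_inner_smul_right] at hu ⊢
  rw [mul_div_assoc]
  exact mul_le_mul_of_nonneg_left hu hc

theorem LinearIsometryEquiv.preimage_cone (e : E ≃ₗᵢ[ℝ] E) (a : E) :
    e ⁻¹' cone (e a) = cone a := by
  ext u
  simp [cone, e.norm_map, e.inner_map_map]

theorem le_inner_of_mem_cone {v w u : E} (hwv : ‖w‖ • v = w) (hu : u ∈ cone v) :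
    ‖w‖ * ‖u‖ / 2 ≤ ⟪w, u⟫ := by
  calc ‖w‖ * ‖u‖ / 2 = ‖w‖ * (‖u‖ / 2) := mul_div_assoc _ _ _
    _ ≤ ‖w‖ * ⟪v, u⟫ := mul_le_mul_of_nonneg_left hu (norm_nonneg w)
    _ = ⟪w, u⟫ := by rw [← real_inner_smul_left, hwv]

theorem norm_sub_lt_of_le_inner {w u : E} {r : ℝ} (hw : ‖w‖ ≤ r) (hur : ‖u‖ < r) (hu : u ≠ 0)
    (hwu : ‖w‖ * ‖u‖ / 2 ≤ ⟪w, u⟫) : ‖w - u‖ < r := by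
  have hu_pos : 0 < ‖u‖ := norm_pos_iff.2 hu
  have hsq : ‖w - u‖ ^ 2 < r ^ 2 := by
    rw [norm_sub_sq_real]
    nlinarith [mul_pos (sub_pos.2 hur) (show 0 < r + ‖u‖ - ‖w‖ by linarith),
      mul_nonneg (norm_nonneg w) (sub_nonneg.2 hw)]
  exact lt_of_pow_lt_pow_left₀ 2 (hu_pos.le.trans hur.le) hsq

theorem exists_norm_eq_one_and_norm_smul_eq [Nontrivial E] (w : E) :
    ∃ v : E, ‖v‖ = 1 ∧ ‖w‖ • v = w := by
  rcases eq_or_ne w 0 with rfl | hw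
  · obtain ⟨v, hv⟩ := exists_norm_eq E zero_le_one
    exact ⟨v, hv, by simp⟩
  · refine ⟨‖w‖⁻¹ • w, ?_, ?_⟩
    · simp [norm_smul, hw]
    · simp [smul_smul, hw]

variable [FiniteDimensional ℝ E]

theorem exists_finset_unit_cone_cover [Nontrivial E] :
    ∃ T : Finset E, (∀ a ∈ T, ‖a‖ = 1) ∧ ∀ u : E, ∃ a ∈ T, u ∈ cone a := by
  have hcover : sphere (0 : E) 1 ⊆ ⋃ a ∈ sphere (0 : E) 1, {u | ‖u‖ / 2 < ⟪a, u⟫} := by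
    intro u hu
    rw [mem_sphere_zero_iff_norm] at hu
    refine mem_iUnion₂.2 ⟨u, mem_sphere_zero_iff_norm.2 hu, ?_⟩
    simp only [mem_ofPred_eq, real_inner_self_eq_norm_sq, hu]
    norm_num
  obtain ⟨B, hBS, hB, hBcover⟩ := (isCompact_sphere (0 : E) 1).elim_finite_subcover_image
    (fun a _ => isOpen_lt (by fun_prop) (by fun_prop)) hcover
  have hcone (u : E) (hu : ‖u‖ = 1) : ∃ a ∈ hB.toFinset, u ∈ cone a := by
    obtain ⟨a, ha, hua⟩ := mem_iUnion₂.1 (hBcover (mem_sphere_zero_iff_norm.2 hu))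
    exact ⟨a, hB.mem_toFinset.2 ha, le_of_lt (show ‖u‖ / 2 < ⟪a, u⟫ from hua)⟩
  refine ⟨hB.toFinset, fun a ha => mem_sphere_zero_iff_norm.1 (hBS (hB.mem_toFinset.1 ha)),
    fun u => ?_⟩
  rcases eq_or_ne u 0 with rfl | hu
  · obtain ⟨v, hv⟩ := exists_norm_eq E zero_le_one
    obtain ⟨a, ha, -⟩ := hcone v hv
    exact ⟨a, ha, zero_mem_cone a⟩
  · obtain ⟨a, ha, hua⟩ := hcone (‖u‖⁻¹ • u) (by simp [norm_smul, hu])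
    refine ⟨a, ha, ?_⟩
    simpa [smul_smul, hu] using smul_mem_cone (norm_nonneg u) hua

variable [MeasurableSpace E] [BorelSpace E]

theorem setLIntegral_ball_inter_cone_congr (φ : ℝ → ℝ≥0∞) (r : ℝ) {a b : E} (h : ‖a‖ = ‖b‖) :
    ∫⁻ y in ball 0 r ∩ cone a, φ ‖y‖ = ∫⁻ y in ball 0 r ∩ cone b, φ ‖y‖ := by
  set e : E ≃ₗᵢ[ℝ] E := Submodule.reflection (ℝ ∙ (a - b))ᗮ
  have hab : e a = b := Submodule.reflection_sub h
  have hpre : e ⁻¹' (ball 0 r ∩ cone b) = ball 0 r ∩ cone a := by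
    rw [preimage_inter, ← hab, e.preimage_cone, e.preimage_ball, map_zero]
  calc ∫⁻ y in ball 0 r ∩ cone a, φ ‖y‖ = ∫⁻ y in e ⁻¹' (ball 0 r ∩ cone b), φ ‖e y‖ := by
        simp only [hpre, e.norm_map]
    _ = ∫⁻ y in ball 0 r ∩ cone b, φ ‖y‖ :=
        e.measurePreserving.setLIntegral_comp_preimage_emb
          e.toMeasurableEquiv.measurableEmbedding (fun y => φ ‖y‖) _

theorem setLIntegral_ball_inter_cone_le_setLIntegral_ball_inter_ball [Nontrivial E]
    (φ : ℝ → ℝ≥0∞) {v w : E} {r : ℝ} (hwv : ‖w‖ • v = w) (hw : ‖w‖ ≤ r) :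
    ∫⁻ y in ball 0 r ∩ cone v, φ ‖y‖ ≤ ∫⁻ y in ball 0 r ∩ ball w r, φ (dist w y) := by
  have hsub : (ball 0 r ∩ cone v) \ {0} ⊆ (w - ·) ⁻¹' (ball 0 r ∩ ball w r) := by
    rintro u ⟨⟨hur, hu⟩, hu0⟩
    rw [mem_ball_zero_iff] at hur
    refine ⟨mem_ball_zero_iff.2 (norm_sub_lt_of_le_inner hw hur hu0 ?_), ?_⟩
    · exact le_inner_of_mem_cone hwv hu
    · simpa [dist_eq_norm] using hur
  calc ∫⁻ y in ball 0 r ∩ cone v, φ ‖y‖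
      = ∫⁻ y in (ball 0 r ∩ cone v) \ {0}, φ ‖y‖ :=
        setLIntegral_congr (sdiff_null_ae_eq_self (measure_singleton 0)).symm
    _ ≤ ∫⁻ u in (w - ·) ⁻¹' (ball 0 r ∩ ball w r), φ (dist w (w - u)) := by
        simp only [dist_eq_norm, _root_.sub_sub_cancel]
        exact lintegral_mono_set hsub
    _ = ∫⁻ y in ball 0 r ∩ ball w r, φ (dist w y) :=
        (volume.measurePreserving_sub_left w).setLIntegral_comp_preimage_emb
          (MeasurableEquiv.subLeft w).measurableEmbedding (fun y => φ (dist w y)) _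

theorem exists_lintegral_ball_le_mul_setLIntegral_ball_inter_ball [Nontrivial E] :
    ∃ N : ℕ, 0 < N ∧ ∀ (φ : ℝ → ℝ≥0∞) (r : ℝ) (w : E), ‖w‖ ≤ r →
      ∫⁻ y in ball (0 : E) r, φ ‖y‖ ≤ N * ∫⁻ y in ball 0 r ∩ ball w r, φ (dist w y) := by
  obtain ⟨T, hT, hTcover⟩ := exists_finset_unit_cone_cover (E := E)
  obtain ⟨a₀, ha₀, -⟩ := hTcover 0
  refine ⟨T.card, Finset.card_pos.2 ⟨a₀, ha₀⟩, fun φ r w hw => ?_⟩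
  obtain ⟨v, hv, hwv⟩ := exists_norm_eq_one_and_norm_smul_eq w
  have hball : ball (0 : E) r ⊆ ⋃ a : T, ball 0 r ∩ cone (a : E) := fun y hy => by
    obtain ⟨a, ha, hya⟩ := hTcover y
    exact mem_iUnion.2 ⟨⟨a, ha⟩, hy, hya⟩
  calc ∫⁻ y in ball 0 r, φ ‖y‖
      ≤ ∑' a : T, ∫⁻ y in ball 0 r ∩ cone (a : E), φ ‖y‖ :=
        (lintegral_mono_set hball).trans (lintegral_iUnion_le _ _)
    _ = ∑ a ∈ T, ∫⁻ y in ball 0 r ∩ cone v, φ ‖y‖ := by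
        rw [tsum_fintype, Finset.sum_coe_sort T (fun a => ∫⁻ y in ball 0 r ∩ cone a, φ ‖y‖)]
        exact Finset.sum_congr rfl fun a ha =>
          setLIntegral_ball_inter_cone_congr φ r (by rw [hT a ha, hv])
    _ ≤ T.card * ∫⁻ y in ball 0 r ∩ ball w r, φ (dist w y) := by
        rw [Finset.sum_const, nsmul_eq_mul]
        exact mul_le_mul_right
          (setLIntegral_ball_inter_cone_le_setLIntegral_ball_inter_ball φ hwv hw) _

end

theorem cone_intersection_lower_bound
    (d : ℕ) (hd : 1 ≤ d) :
    ∃ c : ℝ, 0 < c ∧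
      ∀ (g : ℝ → ℝ), (∀ t > 0, 0 ≤ g t) → (∀ s t : ℝ, 0 < s → s ≤ t → g t ≤ g s) →
        ∀ r : ℝ, 0 < r → ∀ w : EuclideanSpace ℝ (Fin d), ‖w‖ ≤ r →
          ENNReal.ofReal c *
              (∫⁻ y in ball (0 : EuclideanSpace ℝ (Fin d)) r, ENNReal.ofReal (g ‖y‖)) ≤
            ∫⁻ y in ball (0 : EuclideanSpace ℝ (Fin d)) r ∩ ball w r,
              ENNReal.ofReal (g (dist w y)) := by
  have : Nonempty (Fin d) := ⟨⟨0, hd⟩⟩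
  obtain ⟨N, hN, hcover⟩ :=
    exists_lintegral_ball_le_mul_setLIntegral_ball_inter_ball (E := EuclideanSpace ℝ (Fin d))
  refine ⟨1 / N, by positivity, fun g _ _ r _ w hw => ?_⟩
  have hN' : ENNReal.ofReal (1 / N) * N = 1 := by
    rw [← ENNReal.ofReal_natCast, ← ENNReal.ofReal_mul (by positivity), one_div,
      inv_mul_cancel₀ (by positivity), ENNReal.ofReal_one]
  calc _ ≤ ENNReal.ofReal (1 / N) * (N * _) :=
        mul_le_mul_right (hcover (fun t => ENNReal.ofReal (g t)) r w hw) _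
    _ = _ := by rw [← mul_assoc, hN', one_mul]
end
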